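/- arXiv:0803.2318 — 4 statements merged into one kernel-verified Lean document; each statement's English description precedes it below -/
import Mathlib

section
/- Let k, m² ∈ ℂ be parameters and set H = (1/2)(p₂² − p₁²) + (k/2)(q₂² − q₁²) − (m²/12)(q₁⁴ − 6q₁²q₂² + q₂⁴) and I = p₁p₂ + (1/3)(m²(q₂² − q₁²) − 3k)·q₁q₂, both regarded as polynomials in ℂ[q₁, q₂, p₁, p₂]. Then {H, I} = 0, i.e. I is a first integral of the Hamiltonian system generated by H (this is integrable case (1) of the conformally coupled scalar field, where Λ = λ and m² = −3Λ). -/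
/-!
For momentum-free `V`, `W` the bracket `{(p₂² - p₁²)/2 + V, p₁p₂ + W}` equals
`p₂ (∂_{q₁}V - ∂_{q₂}W) + p₁ (∂_{q₂}V + ∂_{q₁}W)`, so it vanishes as soon as `V` and `W` satisfy
the Cauchy–Riemann equations in `(q₁, q₂)`. In case (1), `V + iW = -(k/2) z² - (m²/12) z⁴` with
`z = q₁ + i q₂`.
-/

open MvPolynomial

/-- Canonical Poisson bracket on ℂ[q₁, q₂, p₁, p₂], with variables
q₁ = X 0, q₂ = X 1, p₁ = X 2, p₂ = X 3. -/
noncomputable def poissonBracket (F G : MvPolynomial (Fin 4) ℂ) : MvPolynomial (Fin 4) ℂ :=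
  pderiv 0 F * pderiv 2 G + pderiv 1 F * pderiv 3 G
    - pderiv 2 F * pderiv 0 G - pderiv 3 F * pderiv 1 G

@[simp]
theorem Derivation.map_ofNat {R A M : Type*} [CommSemiring R] [CommSemiring A] [Algebra R A]
    [AddCommMonoid M] [Module A M] [Module R M] (D : Derivation R A M) (n : ℕ) [n.AtLeastTwo] :
    D (no_index (OfNat.ofNat n)) = 0 :=
  D.map_natCast n

theorem poissonBracket_eq_zero_of_cauchy_riemann {V W : MvPolynomial (Fin 4) ℂ}
    (hV₂ : pderiv 2 V = 0) (hV₃ : pderiv 3 V = 0) (hW₂ : pderiv 2 W = 0) (hW₃ : pderiv 3 W = 0)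
    (h₀ : pderiv 0 W = -pderiv 1 V) (h₁ : pderiv 1 W = pderiv 0 V) :
    poissonBracket (C (1/2) * ((X 3)^2 - (X 2)^2) + V) (X 2 * X 3 + W) = 0 := by
  have half_mul_two : (C (1/2) * 2 : MvPolynomial (Fin 4) ℂ) = 1 := by
    rw [← map_ofNat C 2, ← C_mul]
    norm_num
  simp only [poissonBracket, map_add, map_sub, Derivation.leibniz, Derivation.leibniz_pow,
    derivation_C, pderiv_X, Pi.single_apply, Fin.reduceEq, ↓reduceIte, smul_eq_mul, nsmul_eq_mul,
    Nat.cast_ofNat, hV₂, hV₃, hW₂, hW₃, h₀, h₁]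
  linear_combination -(pderiv 0 V * X 3 + pderiv 1 V * X 2) * half_mul_two

/-- Integrable case (1) of the conformally coupled scalar field: `I` is a first
integral of the Hamiltonian system generated by `H`. -/
theorem stmt_0 (k m2 : ℂ)
    (H I : MvPolynomial (Fin 4) ℂ)
    (hH : H = C (1/2) * ((X 3)^2 - (X 2)^2) + C (k/2) * ((X 1)^2 - (X 0)^2)
      - C (m2/12) * ((X 0)^4 - 6 * (X 0)^2 * (X 1)^2 + (X 1)^4))
    (hI : I = X 2 * X 3
      + C (1/3) * (C m2 * ((X 1)^2 - (X 0)^2) - C (3*k)) * (X 0 * X 1)) :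
    poissonBracket H I = 0 := by
  rw [hH, hI, add_sub_assoc]
  apply poissonBracket_eq_zero_of_cauchy_riemann
  iterate 4 simp [pderiv_X]
  all_goals
    simp only [map_add, map_sub, map_mul, Derivation.leibniz, Derivation.leibniz_pow,
      Derivation.map_ofNat, pderiv_C, pderiv_X, Pi.single_apply, Fin.reduceEq, ↓reduceIte,
      smul_eq_mul, nsmul_eq_mul, Nat.cast_ofNat]
    apply MvPolynomial.funext
    intro x
    simp only [map_add, map_sub, map_mul, map_neg, map_pow, map_zero, map_one, eval_C, eval_X,
      eval_ofNat]
    ring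
end

section
/- Let k, m² ∈ ℂ be parameters and set H = (1/2)(p₂² − p₁²) + (k/2)(q₂² − q₁²) − (m²/4)(q₂² − q₁²)² and I = q₁p₂ + q₂p₁, both regarded as polynomials in ℂ[q₁, q₂, p₁, p₂]. Then {H, I} = 0, i.e. I is a first integral of the Hamiltonian system generated by H (this is integrable case (2) of the conformally coupled scalar field, where Λ = λ and m² = −Λ). -/
/-! `I` generates the hyperbolic rotations of the (q₁, q₂)- and (p₁, p₂)-planes, which preserve
`q₂² - q₁²` and `p₂² - p₁²`. Since `F ↦ {F, I}` is a derivation, its kernel is a subalgebra;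
it contains these two quadratics, hence every polynomial in them, in particular `H`. -/

open MvPolynomial

def Derivation.constants {R A : Type*} [CommRing R] [CommRing A] [Algebra R A]
    (D : Derivation R A A) : Subalgebra R A where
  carrier := {a | D a = 0}
  mul_mem' ha hb := by simp_all [D.leibniz]
  add_mem' ha hb := by simp_all
  algebraMap_mem' r := D.map_algebraMap r

theorem Derivation.mem_constants {R A : Type*} [CommRing R] [CommRing A] [Algebra R A]
    (D : Derivation R A A) (a : A) : a ∈ D.constants ↔ D a = 0 :=
  Iff.rfl

noncomputable def poissonBracketLeft (G : MvPolynomial (Fin 4) ℂ) :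
    Derivation ℂ (MvPolynomial (Fin 4) ℂ) (MvPolynomial (Fin 4) ℂ) :=
  pderiv 2 G • pderiv 0 + pderiv 3 G • pderiv 1 - pderiv 0 G • pderiv 2 - pderiv 1 G • pderiv 3

theorem poissonBracketLeft_apply (F G : MvPolynomial (Fin 4) ℂ) :
    poissonBracketLeft G F = poissonBracket F G := by
  simp only [poissonBracketLeft, poissonBracket, Derivation.sub_apply, Derivation.add_apply,
    Derivation.smul_apply, smul_eq_mul]
  ring

theorem poissonBracket_X_one_sq_sub_X_zero_sq :
    poissonBracket (X 1 ^ 2 - X 0 ^ 2) (X 0 * X 3 + X 1 * X 2) = 0 := by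
  simp [poissonBracket, pderiv_X]
  ring

theorem poissonBracket_X_three_sq_sub_X_two_sq :
    poissonBracket (X 3 ^ 2 - X 2 ^ 2) (X 0 * X 3 + X 1 * X 2) = 0 := by
  simp [poissonBracket, pderiv_X]
  ring

/-- Integrable case (2) of the conformally coupled scalar field: `I` is a first
integral of the Hamiltonian system generated by `H`. -/
theorem stmt_1 (k m2 : ℂ)
    (H I : MvPolynomial (Fin 4) ℂ)
    (hH : H = C (1/2) * ((X 3)^2 - (X 2)^2) + C (k/2) * ((X 1)^2 - (X 0)^2)
      - C (m2/4) * ((X 1)^2 - (X 0)^2)^2)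
    (hI : I = X 0 * X 3 + X 1 * X 2) :
    poissonBracket H I = 0 := by
  set S := (poissonBracketLeft I).constants
  have mem_S (F : MvPolynomial (Fin 4) ℂ) : F ∈ S ↔ poissonBracket F I = 0 := by
    rw [Derivation.mem_constants, poissonBracketLeft_apply]
  have hq : X 1 ^ 2 - X 0 ^ 2 ∈ S := (mem_S _).2 (hI ▸ poissonBracket_X_one_sq_sub_X_zero_sq)
  have hp : X 3 ^ 2 - X 2 ^ 2 ∈ S := (mem_S _).2 (hI ▸ poissonBracket_X_three_sq_sub_X_two_sq)
  have hC (c : ℂ) : C c ∈ S := S.algebraMap_mem c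
  rw [← mem_S, hH]
  exact sub_mem (add_mem (mul_mem (hC _) hp) (mul_mem (hC _) hq)) (mul_mem (hC _) (pow_mem hq 2))
end

section
/- Let m² ∈ ℂ be a parameter and set H = (1/2)(p₂² − p₁²) − (m²/24)(16q₁⁴ − 12q₁²q₂² + q₂⁴) and I = (q₁p₂ + q₂p₁)p₂ + (m²/6)q₁q₂²(q₂² − 2q₁²), both regarded as polynomials in ℂ[q₁, q₂, p₁, p₂]. Then {H, I} = 0, i.e. I is a first integral of the Hamiltonian system generated by H (this is integrable case (3) of the conformally coupled scalar field, where k = 0, Λ = 16λ and m² = −6λ). -/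
/-!
Both partial gradients are computed explicitly. Writing `m²/24 · 4 = m²/6`, the bracket
becomes a polynomial identity: the kinetic terms give `p₁p₂² - p₁p₂²`, and the `m²`-terms
cancel separately in the coefficients of `p₁` and of `p₂`.
-/

open MvPolynomial

lemma pderiv_ofNat {σ R : Type*} [CommSemiring R] (i : σ) (n : ℕ) [n.AtLeastTwo] :
    pderiv i (ofNat(n) : MvPolynomial σ R) = 0 :=
  (pderiv i).map_natCast n

noncomputable def conformalHamiltonian (m2 : ℂ) : MvPolynomial (Fin 4) ℂ :=
  C (1/2) * ((X 3)^2 - (X 2)^2)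
    - C (m2/24) * (16 * (X 0)^4 - 12 * (X 0)^2 * (X 1)^2 + (X 1)^4)

noncomputable def conformalIntegral (m2 : ℂ) : MvPolynomial (Fin 4) ℂ :=
  (X 0 * X 3 + X 1 * X 2) * X 3 + C (m2/6) * X 0 * (X 1)^2 * ((X 1)^2 - 2 * (X 0)^2)

lemma C_half_mul_two {σ : Type*} : (C (1 / 2) * 2 : MvPolynomial σ ℂ) = 1 := by
  rw [← map_ofNat C 2, ← C_mul]
  norm_num

section

variable (m2 : ℂ)

lemma C_div_24_mul_four {σ : Type*} : (C (m2 / 24) * 4 : MvPolynomial σ ℂ) = C (m2 / 6) := by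
  rw [← map_ofNat C 4, ← C_mul]
  ring_nf

lemma pderiv_q₁_conformalHamiltonian :
    pderiv 0 (conformalHamiltonian m2) = -C (m2 / 6) * (16 * X 0 ^ 3 - 6 * X 0 * X 1 ^ 2) := by
  simp only [conformalHamiltonian, map_add, map_sub, pderiv_mul, pderiv_pow, pderiv_C, pderiv_ofNat,
    pderiv_X_self, pderiv_X_of_ne, ne_eq, Fin.reduceEq, not_false_eq_true]
  linear_combination -(16 * X 0 ^ 3 - 6 * X 0 * X 1 ^ 2) * C_div_24_mul_four m2

lemma pderiv_q₂_conformalHamiltonian :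
    pderiv 1 (conformalHamiltonian m2) = -C (m2 / 6) * (X 1 ^ 3 - 6 * X 0 ^ 2 * X 1) := by
  simp only [conformalHamiltonian, map_add, map_sub, pderiv_mul, pderiv_pow, pderiv_C, pderiv_ofNat,
    pderiv_X_self, pderiv_X_of_ne, ne_eq, Fin.reduceEq, not_false_eq_true]
  linear_combination -(X 1 ^ 3 - 6 * X 0 ^ 2 * X 1) * C_div_24_mul_four m2

lemma pderiv_p₁_conformalHamiltonian : pderiv 2 (conformalHamiltonian m2) = -X 2 := by
  simp only [conformalHamiltonian, map_add, map_sub, pderiv_mul, pderiv_pow, pderiv_C, pderiv_ofNat,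
    pderiv_X_self, pderiv_X_of_ne, ne_eq, Fin.reduceEq, not_false_eq_true]
  linear_combination -X 2 * C_half_mul_two

lemma pderiv_p₂_conformalHamiltonian : pderiv 3 (conformalHamiltonian m2) = X 3 := by
  simp only [conformalHamiltonian, map_add, map_sub, pderiv_mul, pderiv_pow, pderiv_C, pderiv_ofNat,
    pderiv_X_self, pderiv_X_of_ne, ne_eq, Fin.reduceEq, not_false_eq_true]
  linear_combination X 3 * C_half_mul_two

lemma pderiv_q₁_conformalIntegral :
    pderiv 0 (conformalIntegral m2) = X 3 ^ 2 + C (m2 / 6) * (X 1 ^ 4 - 6 * X 0 ^ 2 * X 1 ^ 2) := by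
  simp only [conformalIntegral, map_add, map_sub, pderiv_mul, pderiv_pow, pderiv_C, pderiv_ofNat,
    pderiv_X_self, pderiv_X_of_ne, ne_eq, Fin.reduceEq, not_false_eq_true]
  ring

lemma pderiv_q₂_conformalIntegral :
    pderiv 1 (conformalIntegral m2) =
      X 2 * X 3 + C (m2 / 6) * (4 * X 0 * X 1 ^ 3 - 4 * X 0 ^ 3 * X 1) := by
  simp only [conformalIntegral, map_add, map_sub, pderiv_mul, pderiv_pow, pderiv_C, pderiv_ofNat,
    pderiv_X_self, pderiv_X_of_ne, ne_eq, Fin.reduceEq, not_false_eq_true]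
  ring

lemma pderiv_p₁_conformalIntegral : pderiv 2 (conformalIntegral m2) = X 1 * X 3 := by
  simp only [conformalIntegral, map_add, map_sub, pderiv_mul, pderiv_pow, pderiv_C, pderiv_ofNat,
    pderiv_X_self, pderiv_X_of_ne, ne_eq, Fin.reduceEq, not_false_eq_true]
  ring

lemma pderiv_p₂_conformalIntegral :
    pderiv 3 (conformalIntegral m2) = 2 * X 0 * X 3 + X 1 * X 2 := by
  simp only [conformalIntegral, map_add, map_sub, pderiv_mul, pderiv_pow, pderiv_C, pderiv_ofNat,
    pderiv_X_self, pderiv_X_of_ne, ne_eq, Fin.reduceEq, not_false_eq_true]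
  ring

theorem poissonBracket_conformalHamiltonian_conformalIntegral :
    poissonBracket (conformalHamiltonian m2) (conformalIntegral m2) = 0 := by
  rw [poissonBracket, pderiv_q₁_conformalHamiltonian, pderiv_q₂_conformalHamiltonian,
    pderiv_p₁_conformalHamiltonian, pderiv_p₂_conformalHamiltonian, pderiv_q₁_conformalIntegral,
    pderiv_q₂_conformalIntegral, pderiv_p₁_conformalIntegral, pderiv_p₂_conformalIntegral]
  ring

end

/-- Integrable case (3) of the conformally coupled scalar field (k = 0,
Λ = 16λ, m² = −6λ): `I` is a first integral of the Hamiltonian system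
generated by `H`. -/
theorem stmt_2 (m2 : ℂ)
    (H I : MvPolynomial (Fin 4) ℂ)
    (hH : H = C (1/2) * ((X 3)^2 - (X 2)^2)
      - C (m2/24) * (16 * (X 0)^4 - 12 * (X 0)^2 * (X 1)^2 + (X 1)^4))
    (hI : I = (X 0 * X 3 + X 1 * X 2) * X 3
      + C (m2/6) * X 0 * (X 1)^2 * ((X 1)^2 - 2 * (X 0)^2)) :
    poissonBracket H I = 0 := by
  subst hH hI
  exact poissonBracket_conformalHamiltonian_conformalIntegral m2
end

section
/- Let l₁, l₂, l₃ be integers with l₁ ≥ 2, l₂ ≥ 2, l₃ ≥ 0 and l₃ ≠ 1, and set λᵢ = lᵢ(lᵢ + 1)/2 ∈ ℚ for i = 1, 2, 3. Then 1/(λ₁ − 1) + 1/(λ₂ − 1) + 2/(λ₃ − 1) = −1 holds if and only if l₁ = l₂ = 2 and l₃ = 0. -/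
/-! For `l ≥ 2` the number `λ - 1 = (l - 1)(l + 2)/2` is at least `2`, with equality only at
`l = 2`. If `l₃ ≥ 2` every term on the left is positive, so the sum cannot be `-1`. If `l₃ = 0`
the last term is `-2`, leaving `1/(λ₁ - 1) + 1/(λ₂ - 1) = 1` with both reciprocals at most `1/2`,
which forces `λ₁ - 1 = λ₂ - 1 = 2`, i.e. `l₁ = l₂ = 2`. -/

lemma two_le_triangular_sub_one {l : ℤ} (hl : 2 ≤ l) : (2 : ℚ) ≤ l * (l + 1) / 2 - 1 := by
  have : (2 : ℚ) ≤ l := by exact_mod_cast hl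
  nlinarith

lemma eq_two_of_triangular_sub_one_eq_two {l : ℤ} (hl : 0 ≤ l)
    (h : (l : ℚ) * (l + 1) / 2 - 1 = 2) : l = 2 := by
  have h6 : l * (l + 1) = 6 := by exact_mod_cast (by linarith : (l : ℚ) * (l + 1) = 6)
  have : (l - 2) * (l + 3) = 0 := by linear_combination h6
  rcases mul_eq_zero.mp this with h | h <;> omega

lemma eq_two_of_one_div_add_one_div_eq_one {K : Type*} [Field K] [LinearOrder K]
    [IsStrictOrderedRing K] {a b : K} (ha : 2 ≤ a) (hb : 2 ≤ b) (h : 1 / a + 1 / b = 1) :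
    a = 2 ∧ b = 2 := by
  have ha' : 1 / a ≤ 1 / 2 := one_div_le_one_div_of_le two_pos ha
  have hb' : 1 / b ≤ 1 / 2 := one_div_le_one_div_of_le two_pos hb
  have hab : 1 / a = 1 / 2 ∧ 1 / b = 1 / 2 := ⟨by linarith, by linarith⟩
  simpa only [one_div, inv_inj] using hab

/-- On the zero-energy level with k² = 1, the necessary integrability
conditions λᵢ = lᵢ(lᵢ+1)/2 together with the relation
1/(λ₁−1) + 1/(λ₂−1) + 2/(λ₃−1) = −1 single out l₁ = l₂ = 2, l₃ = 0. -/
theorem stmt_13 (l1 l2 l3 : ℤ) (h1 : 2 ≤ l1) (h2 : 2 ≤ l2) (h3 : 0 ≤ l3)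
    (h3' : l3 ≠ 1) :
    (1 / ((l1 : ℚ) * (l1 + 1) / 2 - 1) + 1 / ((l2 : ℚ) * (l2 + 1) / 2 - 1)
        + 2 / ((l3 : ℚ) * (l3 + 1) / 2 - 1) = -1)
      ↔ (l1 = 2 ∧ l2 = 2 ∧ l3 = 0) := by
  have hA := two_le_triangular_sub_one h1
  have hB := two_le_triangular_sub_one h2
  constructor
  · intro h
    obtain rfl | hl3 : l3 = 0 ∨ 2 ≤ l3 := by omega
    · have hAB : 1 / ((l1 : ℚ) * (l1 + 1) / 2 - 1) + 1 / ((l2 : ℚ) * (l2 + 1) / 2 - 1) = 1 := by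
        norm_num at h
        rw [one_div, one_div]
        linarith
      obtain ⟨hA2, hB2⟩ := eq_two_of_one_div_add_one_div_eq_one hA hB hAB
      exact ⟨eq_two_of_triangular_sub_one_eq_two (by omega) hA2,
        eq_two_of_triangular_sub_one_eq_two (by omega) hB2, rfl⟩
    · have hC := two_le_triangular_sub_one hl3
      have : 0 < 1 / ((l1 : ℚ) * (l1 + 1) / 2 - 1) + 1 / ((l2 : ℚ) * (l2 + 1) / 2 - 1)
          + 2 / ((l3 : ℚ) * (l3 + 1) / 2 - 1) := by
        have : (0 : ℚ) < (l1 : ℚ) * (l1 + 1) / 2 - 1 := by linarith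
        have : (0 : ℚ) < (l2 : ℚ) * (l2 + 1) / 2 - 1 := by linarith
        have : (0 : ℚ) < (l3 : ℚ) * (l3 + 1) / 2 - 1 := by linarith
        positivity
      linarith
  · rintro ⟨rfl, rfl, rfl⟩
    norm_num
end
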